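/- Let a and b be positive integers. The number of free Motzkin paths of type (a+b, −b) that start with a down step D or a flat step F and end with a down step D or a flat step F equals Σ_{i=0}^{a} C(a+b−2, ⌊i/2⌋) · C(a+b−1−⌊i/2⌋, a−i). -/

import Mathlib

/-- A strict partition, encoded as a strictly decreasing list of positive integers. -/
def IsStrictPartition (l : List ℕ) : Prop :=
  List.Pairwise (· > ·) l ∧ ∀ x ∈ l, 0 < x

/-- The set of bar lengths in the (0-indexed) `i`-th row of a strict partition `l`:
`{λᵢ + λⱼ : i < j ≤ ℓ} ∪ ({1,…,λᵢ} \ {λᵢ − λⱼ : i < j ≤ ℓ})`. -/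
def barLengths (l : List ℕ) (i : ℕ) : Finset ℕ :=
  ((Finset.Ioo i l.length).image fun j => l.getD i 0 + l.getD j 0) ∪
    (Finset.Icc 1 (l.getD i 0) \
      ((Finset.Ioo i l.length).image fun j => l.getD i 0 - l.getD j 0))

/-- `l` is an `s`-bar-core: `s` is not a bar length in any row. -/
def IsBarCore (l : List ℕ) (s : ℕ) : Prop :=
  ∀ i, i < l.length → s ∉ barLengths l i

/-- The shifted hook length of the box in row `i`, column `c` (both 0-indexed, where the
`i`-th row of the shifted Young diagram occupies columns `i, …, λᵢ + i − 1`): the number of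
boxes to its right in row `i` together with itself, plus the number of boxes below it in
column `c`, plus the number of boxes of row `c + 1` if that row exists. -/
def shiftedHook (l : List ℕ) (i c : ℕ) : ℕ :=
  (l.getD i 0 + i - c) +
    ((Finset.Ioc i c).filter fun i' => c < l.getD i' 0 + i').card +
    l.getD (c + 1) 0

/-- `l` is an `s`-CSYD: no shifted hook length of the shifted Young diagram `S(λ)`
is divisible by `s`. -/
def IsCSYD (l : List ℕ) (s : ℕ) : Prop :=
  ∀ i c, i < l.length → i ≤ c → c < l.getD i 0 + i → ¬ s ∣ shiftedHook l i c

/-- The `i`-th part (0-indexed) of the doubled distinct partition `λλ`, read off from the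
Frobenius symbol `(λ₁,…,λ_ℓ ; λ₁−1,…,λ_ℓ−1)`: for `i < ℓ` the part is `λᵢ + i + 1`
(1-indexed: `λᵢ + i`), and for `ℓ ≤ i` the part is determined by the column lengths
`λⱼ + j − 1` (1-indexed). -/
def ddPart (l : List ℕ) (i : ℕ) : ℕ :=
  if i < l.length then l.getD i 0 + i + 1
  else ((Finset.range l.length).filter fun j => i + 1 ≤ l.getD j 0 + j).card

/-- The doubled distinct partition `λλ` of a strict partition `l`, as a list of parts. -/
def doubledDistinct (l : List ℕ) : List ℕ :=
  (List.range (l.getD 0 0)).map (ddPart l)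

/-- Ordinary hook length of the box in row `i`, column `j` (0-indexed) of a partition `m`. -/
def hookLen (m : List ℕ) (i j : ℕ) : ℕ :=
  (m.getD i 0 - j) + ((Finset.Ioo i m.length).filter fun i' => j < m.getD i' 0).card

/-- `m` is an `s`-core: no hook length is divisible by `s`. -/
def IsCore (m : List ℕ) (s : ℕ) : Prop :=
  ∀ i j, i < m.length → j < m.getD i 0 → ¬ s ∣ hookLen m i j

/-- NE lattice paths from `(0,0)` to `(a,b)`, encoded as lists of steps where
`false` is an east step `E = (1,0)` and `true` is a north step `N = (0,1)`. -/
def NEPaths (a b : ℕ) : Set (List Bool) :=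
  {w | w.count false = a ∧ w.count true = b}

/-- A step of a free Motzkin path. -/
inductive MStep : Type
  | U : MStep
  | F : MStep
  | D : MStep
deriving DecidableEq

/-- The height change of a step: `U = (1,1)`, `F = (1,0)`, `D = (1,−1)`. -/
def MStep.ht : MStep → ℤ
  | .U => 1
  | .F => 0
  | .D => -1

/-- Free Motzkin paths of type `(p,q)`: lattice paths from `(0,0)` to `(p,q)` with steps
`U = (1,1)`, `F = (1,0)` and `D = (1,−1)`, encoded as lists of steps. -/
def FreeMotzkin (p : ℕ) (q : ℤ) : Set (List MStep) :=
  {w | w.length = p ∧ (w.map MStep.ht).sum = q}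

/-- `multinom n a b c = n! / (a! · b! · c!)`. -/
def multinom (n a b c : ℕ) : ℕ :=
  n.factorial / (a.factorial * b.factorial * c.factorial)


section MotzkinAux

open Finset

lemma head?_ofFn' {n : ℕ} (f : Fin n → MStep) (h : 0 < n) :
    (List.ofFn f).head? = some (f ⟨0, h⟩) := by
  cases n with
  | zero => omega
  | succ m => rw [List.ofFn_succ]; rfl

lemma getLast?_ofFn' {n : ℕ} (f : Fin n → MStep) (h : 0 < n) :
    (List.ofFn f).getLast? = some (f ⟨n - 1, by omega⟩) := by
  rw [List.getLast?_eq_getElem?, List.length_ofFn, List.getElem?_ofFn]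
  have hlt : n - 1 < n := by omega
  simp [List.ofFnNthVal, hlt]

lemma sum_ht' {n : ℕ} (f : Fin n → MStep) :
    ∑ i, (f i).ht =
      ((Finset.univ.filter fun i => f i = MStep.U).card : ℤ) -
        ((Finset.univ.filter fun i => f i = MStep.D).card : ℤ) := by
  rw [← Finset.sum_boole, ← Finset.sum_boole, ← Finset.sum_sub_distrib]
  refine Finset.sum_congr rfl fun i _ => ?_
  cases h : f i <;> simp [MStep.ht, h]

lemma exists_ofFn' {α : Type*} (w : List α) {n : ℕ} (h : w.length = n) :
    ∃ f : Fin n → α, w = List.ofFn f := by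
  subst h
  exact ⟨w.get, (List.ofFn_get w).symm⟩

lemma sum_range_two_mul' {M : Type*} [AddCommMonoid M] (m : ℕ) (f : ℕ → M) :
    ∑ i ∈ Finset.range (2 * m), f i
      = ∑ j ∈ Finset.range m, (f (2 * j) + f (2 * j + 1)) := by
  induction m with
  | zero => simp
  | succ k ih =>
      rw [Finset.sum_range_succ, ← ih, show 2 * (k + 1) = (2 * k + 1) + 1 by ring,
        Finset.sum_range_succ, Finset.sum_range_succ, add_assoc]

lemma pascal_pair' (n a j : ℕ) (h1 : 2 * j + 1 ≤ a) (h2 : j + 1 ≤ n) :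
    Nat.choose (n - 1 - j) (a - 2 * j) + Nat.choose (n - 1 - j) (a - (2 * j + 1))
      = Nat.choose (n - j) (a - 2 * j) := by
  obtain ⟨M, hM⟩ : ∃ M, n - j = M + 1 := ⟨n - j - 1, by omega⟩
  obtain ⟨k, hk⟩ : ∃ k, a - 2 * j = k + 1 := ⟨a - 2 * j - 1, by omega⟩
  have h3 : n - 1 - j = M := by omega
  have h4 : a - (2 * j + 1) = k := by omega
  rw [hM, hk, h3, h4, Nat.choose_succ_succ, Nat.add_comm]

lemma choose_symm_term' (a b j : ℕ) (h : 2 * j ≤ a) :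
    Nat.choose (a + b - j) (a - 2 * j) = Nat.choose (a + b - j) (j + b) := by
  have h1 : a - 2 * j ≤ a + b - j := by omega
  have h2 : (a + b - j) - (a - 2 * j) = j + b := by omega
  rw [← h2]
  exact (Nat.choose_symm h1).symm

lemma sum_identity' (a b : ℕ) (ha : 0 < a) (hb : 0 < b) :
    ∑ u ∈ Finset.range (a + b - 1), Nat.choose (a + b - 2) u * Nat.choose (a + b - u) (u + b)
      = ∑ i ∈ Finset.range (a + 1),
          Nat.choose (a + b - 2) (i / 2) * Nat.choose (a + b - 1 - i / 2) (a - i) := by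
  have hsub : Finset.range (a / 2 + 1) ⊆ Finset.range (a + b - 1) := by
    apply Finset.range_subset_range.2; omega
  rw [← Finset.sum_subset hsub (by
    intro u hu hnu
    simp only [Finset.mem_range] at hu hnu
    have : a + b - u < u + b := by omega
    rw [Nat.choose_eq_zero_of_lt this, mul_zero])]
  have key : ∀ j, 2 * j + 1 ≤ a →
      Nat.choose (a + b - 2) j * Nat.choose (a + b - j) (j + b)
        = Nat.choose (a + b - 2) ((2 * j) / 2) * Nat.choose (a + b - 1 - (2 * j) / 2) (a - 2 * j)
          + Nat.choose (a + b - 2) ((2 * j + 1) / 2)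
              * Nat.choose (a + b - 1 - (2 * j + 1) / 2) (a - (2 * j + 1)) := by
    intro j hj
    have e1 : (2 * j) / 2 = j := by omega
    have e2 : (2 * j + 1) / 2 = j := by omega
    rw [e1, e2, ← mul_add, ← choose_symm_term' a b j (by omega)]
    congr 1
    rw [← pascal_pair' (a + b) a j hj (by omega)]
  rcases Nat.even_or_odd a with ⟨m, hm⟩ | ⟨m, hm⟩
  · -- a = m + m
    have hd : a / 2 = m := by omega
    rw [hd, Finset.sum_range_succ, show a + 1 = 2 * m + 1 by omega,
      Finset.sum_range_succ, sum_range_two_mul' m]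
    congr 1
    · exact Finset.sum_congr rfl fun j hj => by
        rw [key j (by simp only [Finset.mem_range] at hj; omega)]
    · have e1 : (2 * m) / 2 = m := by omega
      have e2 : a - 2 * m = 0 := by omega
      have e3 : a + b - m = m + b := by omega
      rw [e1, e2, e3, Nat.choose_self, Nat.choose_zero_right]
  · -- a = 2m+1
    have hd : a / 2 = m := by omega
    rw [hd, show a + 1 = 2 * (m + 1) by omega, sum_range_two_mul' (m + 1)]
    exact Finset.sum_congr rfl fun j hj => by
      rw [key j (by simp only [Finset.mem_range] at hj; omega)]

/-- The step word determined by a set of up-positions and a set of down-positions. -/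
def mfun {n : ℕ} (A B : Finset (Fin n)) (i : Fin n) : MStep :=
  if i ∈ A then MStep.U else if i ∈ B then MStep.D else MStep.F

lemma mfun_filtU {n : ℕ} (A B : Finset (Fin n)) :
    (Finset.univ.filter fun i => mfun A B i = MStep.U) = A := by
  ext i
  by_cases h1 : i ∈ A <;> by_cases h2 : i ∈ B <;> simp [mfun, h1, h2]

lemma mfun_filtD {n : ℕ} (A B : Finset (Fin n)) (hBA : B ⊆ Aᶜ) :
    (Finset.univ.filter fun i => mfun A B i = MStep.D) = B := by
  ext i
  by_cases h1 : i ∈ A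
  · have : i ∉ B := fun hB => by simpa [h1] using hBA hB
    simp only [Finset.mem_filter, Finset.mem_univ, true_and]; simp [mfun, h1, this]
  · by_cases h2 : i ∈ B <;> simp only [Finset.mem_filter, Finset.mem_univ, true_and] <;> simp [mfun, h1, h2]

lemma mfun_get {n : ℕ} (f : Fin n → MStep) :
    mfun (Finset.univ.filter fun i => f i = MStep.U)
      (Finset.univ.filter fun i => f i = MStep.D) = f := by
  funext i
  rcases h : f i with _ | _ | _ <;> simp [mfun, Finset.mem_filter, h]

lemma count_paths' (n b : ℕ) (hn : 2 ≤ n) (hb : 0 < b) :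
    {w : List MStep | w ∈ FreeMotzkin n (-(b : ℤ)) ∧
        (w.head? = some MStep.D ∨ w.head? = some MStep.F) ∧
        (w.getLast? = some MStep.D ∨ w.getLast? = some MStep.F)}.ncard =
      ∑ u ∈ Finset.range (n - 1), Nat.choose (n - 2) u * Nat.choose (n - u) (u + b) := by
  have h0 : 0 < n := by omega
  have hn1 : n - 1 < n := by omega
  have hne : (⟨0, h0⟩ : Fin n) ≠ ⟨n - 1, hn1⟩ := by
    simp only [Ne, Fin.mk.injEq]
    omega
  set mid : Finset (Fin n) := {(⟨0, h0⟩ : Fin n), ⟨n - 1, hn1⟩}ᶜ with hmid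
  have hi0mid : (⟨0, h0⟩ : Fin n) ∉ mid := by simp [hmid]
  have hi1mid : (⟨n - 1, hn1⟩ : Fin n) ∉ mid := by simp [hmid]
  have hmidcard : mid.card = n - 2 := by
    rw [hmid, Finset.card_compl, Finset.card_pair hne, Fintype.card_fin]
  set T := mid.powerset.sigma (fun A => (Aᶜ).powersetCard (A.card + b)) with hT
  have himg : {w : List MStep | w ∈ FreeMotzkin n (-(b : ℤ)) ∧
      (w.head? = some MStep.D ∨ w.head? = some MStep.F) ∧
      (w.getLast? = some MStep.D ∨ w.getLast? = some MStep.F)}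
      = (fun p : (Σ _ : Finset (Fin n), Finset (Fin n)) => List.ofFn (mfun p.1 p.2)) '' ↑T := by
    ext w
    simp only [Set.mem_setOf_eq, FreeMotzkin, Set.mem_image, Finset.mem_coe]
    constructor
    · rintro ⟨⟨hlen, hsum⟩, hhead, hlast⟩
      obtain ⟨f, rfl⟩ := exists_ofFn' w hlen
      rw [List.map_ofFn, List.sum_ofFn] at hsum
      simp only [Function.comp] at hsum
      rw [sum_ht' f] at hsum
      rw [head?_ofFn' f h0] at hhead
      rw [getLast?_ofFn' f h0] at hlast
      have hfU0 : f ⟨0, h0⟩ ≠ MStep.U := by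
        rcases hhead with h | h <;>
          · rw [Option.some_inj] at h
            rw [h]
            simp
      have hfU1 : f ⟨n - 1, hn1⟩ ≠ MStep.U := by
        rcases hlast with h | h <;>
          · rw [Option.some_inj] at h
            rw [h]
            simp
      refine ⟨⟨Finset.univ.filter (fun i => f i = MStep.U),
        Finset.univ.filter (fun i => f i = MStep.D)⟩, ?_, ?_⟩
      · rw [hT, Finset.mem_sigma, Finset.mem_powerset, Finset.mem_powersetCard]
        refine ⟨?_, ?_, ?_⟩
        · intro i hi
          simp only [Finset.mem_filter, Finset.mem_univ, true_and] at hi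
          rw [hmid, Finset.mem_compl, Finset.mem_insert, Finset.mem_singleton]
          rintro (rfl | rfl)
          · exact hfU0 hi
          · exact hfU1 hi
        · intro i hi
          simp only [Finset.mem_filter, Finset.mem_univ, true_and] at hi
          simp only [Finset.mem_compl, Finset.mem_filter, Finset.mem_univ, true_and]
          rw [hi]; simp
        · show (Finset.univ.filter fun i => f i = MStep.D).card
            = (Finset.univ.filter fun i => f i = MStep.U).card + b
          omega
      · show List.ofFn (mfun (Finset.univ.filter fun i => f i = MStep.U)
          (Finset.univ.filter fun i => f i = MStep.D)) = List.ofFn f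
        rw [mfun_get]
    · rintro ⟨⟨A, B⟩, hmem, rfl⟩
      rw [hT, Finset.mem_sigma, Finset.mem_powerset, Finset.mem_powersetCard] at hmem
      obtain ⟨hA, hBsub, hBcard⟩ := hmem
      have hi0A : (⟨0, h0⟩ : Fin n) ∉ A := fun h => hi0mid (hA h)
      have hi1A : (⟨n - 1, hn1⟩ : Fin n) ∉ A := fun h => hi1mid (hA h)
      refine ⟨⟨List.length_ofFn, ?_⟩, ?_, ?_⟩
      · show ((List.ofFn (mfun A B)).map MStep.ht).sum = -(b : ℤ)
        rw [List.map_ofFn, List.sum_ofFn]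
        simp only [Function.comp]
        rw [sum_ht' (mfun A B), mfun_filtU A B, mfun_filtD A B hBsub, hBcard]
        push_cast
        ring
      · show (List.ofFn (mfun A B)).head? = some MStep.D ∨
          (List.ofFn (mfun A B)).head? = some MStep.F
        rw [head?_ofFn' _ h0]
        by_cases h2 : (⟨0, h0⟩ : Fin n) ∈ B
        · left; simp [mfun, hi0A, h2]
        · right; simp [mfun, hi0A, h2]
      · show (List.ofFn (mfun A B)).getLast? = some MStep.D ∨
          (List.ofFn (mfun A B)).getLast? = some MStep.F
        rw [getLast?_ofFn' _ h0]
        by_cases h2 : (⟨n - 1, hn1⟩ : Fin n) ∈ B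
        · left; simp [mfun, hi1A, h2]
        · right; simp [mfun, hi1A, h2]
  have hinj : Set.InjOn
      (fun p : (Σ _ : Finset (Fin n), Finset (Fin n)) => List.ofFn (mfun p.1 p.2)) ↑T := by
    rintro ⟨A, B⟩ hAB ⟨A', B'⟩ hAB' heq
    rw [Finset.mem_coe, hT, Finset.mem_sigma, Finset.mem_powerset,
      Finset.mem_powersetCard] at hAB hAB'
    have hfun : mfun A B = mfun A' B' := List.ofFn_injective heq
    have hAeq : A = A' := by
      rw [← mfun_filtU A B, ← mfun_filtU A' B', hfun]
    have hBeq : B = B' := by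
      rw [← mfun_filtD A B hAB.2.1, ← mfun_filtD A' B' hAB'.2.1, ← hAeq, hfun, hAeq]
    subst hAeq
    subst hBeq
    rfl
  rw [himg, Set.ncard_image_of_injOn hinj, Set.ncard_coe_finset, hT, Finset.card_sigma]
  have hcards : ∀ A ∈ mid.powerset, ((Aᶜ).powersetCard (A.card + b)).card
      = (n - A.card).choose (A.card + b) := by
    intro A _
    rw [Finset.card_powersetCard, Finset.card_compl, Fintype.card_fin]
  rw [Finset.sum_congr rfl hcards, Finset.sum_powerset, hmidcard,
    show n - 2 + 1 = n - 1 by omega]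
  refine Finset.sum_congr rfl fun u hu => ?_
  have hconst : ∀ A ∈ Finset.powersetCard u mid,
      (n - A.card).choose (A.card + b) = (n - u).choose (u + b) := by
    intro A hA
    rw [(Finset.mem_powersetCard.1 hA).2]
  rw [Finset.sum_congr rfl hconst, Finset.sum_const, Finset.card_powersetCard, hmidcard,
    smul_eq_mul]

end MotzkinAux

/-- For positive integers `a` and `b`, the number of free Motzkin paths of
type `(a+b, −b)` that start with a down or flat step and end with a down or flat step equals
`Σ_{i=0}^{a} C(a+b−2, ⌊i/2⌋) · C(a+b−1−⌊i/2⌋, a−i)`. -/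
theorem free_motzkin_count_start_end_down (a b : ℕ) (ha : 0 < a) (hb : 0 < b) :
    {w : List MStep | w ∈ FreeMotzkin (a + b) (-(b : ℤ)) ∧
        (w.head? = some MStep.D ∨ w.head? = some MStep.F) ∧
        (w.getLast? = some MStep.D ∨ w.getLast? = some MStep.F)}.ncard =
      ∑ i ∈ Finset.range (a + 1),
        Nat.choose (a + b - 2) (i / 2) * Nat.choose (a + b - 1 - i / 2) (a - i) := by
  rw [count_paths' (a + b) b (by omega) hb]
  have h : ∀ u, a + b - u = (a + b) - u := fun u => rfl
  exact sum_identity' a b ha hb
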